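/- Let f : {−1,1}^n → {−1,1}, let δ ∈ [0,1], and let π be a restriction fixing |π| coordinates to ±1 values. Then for every x ∈ {−1,1}^n, |(f_π)_δ(x) − (f_δ)_π(x)| ≤ δ·|π|, where (f_π)_δ is the δ-smoothed version of the restricted function f_π, and (f_δ)_π is the restriction of the δ-smoothed function f_δ. -/
import Mathlib


/-!
Noise smoothing and restrictions of boolean functions on {-1,1}^n; a point of the cube is
encoded as `x : Fin n → Bool` (`true` encodes 1, `false` encodes -1). A restriction is
encoded as `π : Fin n → Option Bool`, where `π j = some b` fixes coordinate `j` to `b`.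
-/

open Finset

set_option maxHeartbeats 1000000

/-- The ±1 real value encoded by a boolean: `true ↦ 1`, `false ↦ -1`. -/
noncomputable def bval (b : Bool) : ℝ := if b then 1 else -1

/-- The `δ`-smoothed version of `g`: `g_δ(x) = E[g(x̃)]`, where `x̃` is obtained from `x`
by flipping each coordinate independently with probability `δ/2` (equivalently,
rerandomizing each coordinate independently with probability `δ`). -/
noncomputable def smooth {n : ℕ} (δ : ℝ) (g : (Fin n → Bool) → ℝ) (x : Fin n → Bool) : ℝ :=
  ∑ y : Fin n → Bool, (∏ i : Fin n, if y i = x i then 1 - δ / 2 else δ / 2) * g y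

/-- Apply a restriction: coordinates fixed by `π` are overridden, the rest are read from `x`.
Thus `g ∘ applyR π` is the restricted function `g_π`, viewed as a function of all `n`
variables that ignores the fixed coordinates. -/
def applyR {n : ℕ} (π : Fin n → Option Bool) (x : Fin n → Bool) : Fin n → Bool :=
  fun j => (π j).getD (x j)

/-- `|π|`: the number of coordinates fixed by the restriction `π`. -/
def rsize {n : ℕ} (π : Fin n → Option Bool) : ℕ :=
  (Finset.univ.filter fun j => (π j).isSome).card

lemma sum_prod_bool {n : ℕ} (q : Fin n → Bool → ℝ) :
    ∑ y : Fin n → Bool, ∏ i, q i (y i) = ∏ i, (q i true + q i false) := by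
  rw [← Fintype.prod_sum q]
  exact Finset.prod_congr rfl fun i _ => by rw [Fintype.sum_bool]

lemma singleStep {n : ℕ} (δ : ℝ) (hδ0 : 0 ≤ δ) (hδ1 : δ ≤ 1) (h : (Fin n → Bool) → ℝ)
    (hb : ∀ z, |h z| ≤ 1) (j : Fin n) (b : Bool) (y : Fin n → Bool) :
    |smooth δ (fun z => h (Function.update z j b)) y - smooth δ h (Function.update y j b)| ≤ δ := by
  classical
  set w : Bool → Bool → ℝ := fun a c => if a = c then 1 - δ / 2 else δ / 2 with hw
  have wnn : ∀ a c, 0 ≤ w a c := by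
    intro a c; simp only [hw]; split <;> linarith
  have wsum : ∀ a c, w a c + w (!a) c = 1 := by
    intro a c; cases a <;> cases c <;> simp [hw]
  set P : (Fin n → Bool) → ℝ := fun z => ∏ i ∈ univ.erase j, w (z i) (y i) with hP
  have Pnn : ∀ z, 0 ≤ P z := fun z => Finset.prod_nonneg fun i _ => wnn _ _
  set W : (Fin n → Bool) → (Fin n → Bool) → ℝ := fun z c => ∏ i, w (z i) (c i) with hW
  set fl : (Fin n → Bool) → (Fin n → Bool) := fun z => Function.update z j (!(z j)) with hfl
  have flinv : Function.Involutive fl := by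
    intro z
    simp only [hfl, Function.update_idem, Function.update_self, Bool.not_not,
      Function.update_eq_self]
  set σ : Equiv.Perm (Fin n → Bool) := flinv.toPerm with hσ
  set d : (Fin n → Bool) → ℝ :=
    fun z => W z y * h (Function.update z j b) - W z (Function.update y j b) * h z with hd
  have hsm : smooth δ (fun z => h (Function.update z j b)) y
      - smooth δ h (Function.update y j b) = ∑ z : Fin n → Bool, d z := by
    simp only [smooth, hd, hW, hw]
    rw [← Finset.sum_sub_distrib]
  -- P is invariant under fl
  have Pfl : ∀ z, P (fl z) = P z := by
    intro z
    refine Finset.prod_congr rfl fun i hi => ?_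
    simp only [hfl]
    rw [Function.update_of_ne (Finset.mem_erase.1 hi).1]
  -- factorizations
  have Wfac : ∀ z c, W z c = w (z j) (c j) * ∏ i ∈ univ.erase j, w (z i) (c i) :=
    fun z c => (Finset.mul_prod_erase univ _ (mem_univ j)).symm
  have Wy : ∀ z, W z y = w (z j) (y j) * P z := fun z => Wfac z y
  have Wuy : ∀ z, W z (Function.update y j b) = w (z j) b * P z := by
    intro z
    rw [Wfac]
    congr 1
    · rw [Function.update_self]
    · refine Finset.prod_congr rfl fun i hi => ?_
      rw [Function.update_of_ne (Finset.mem_erase.1 hi).1]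
  -- key pairing identity
  have key : ∀ z, z j = b →
      d z + d (fl z) = δ / 2 * P z * (h z - h (fl z)) := by
    intro z hz
    have hflz : fl z = Function.update z j (!b) := by simp only [hfl]; rw [hz]
    have hupz : Function.update z j b = z := by rw [← hz, Function.update_eq_self]
    have hupflz : Function.update (fl z) j b = z := by
      rw [hflz, Function.update_idem, hupz]
    have hflj : (fl z) j = !b := by rw [hflz, Function.update_self]
    have e1 : W z y = w b (y j) * P z := by rw [Wy, hz]
    have e2 : W z (Function.update y j b) = (1 - δ / 2) * P z := by
      rw [Wuy, hz]; simp [hw]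
    have e3 : W (fl z) y = w (!b) (y j) * P z := by rw [Wy, hflj, Pfl]
    have e4 : W (fl z) (Function.update y j b) = δ / 2 * P z := by
      rw [Wuy, hflj, Pfl]; simp [hw]
    have hws := wsum b (y j)
    simp only [hd, e1, e2, e3, e4, hupz, hupflz]
    linear_combination (P z * h z) * hws
  -- regroup the sum in pairs
  have regroup : ∑ z : Fin n → Bool, d z
      = ∑ z : Fin n → Bool, (if z j = b then d z + d (fl z) else 0) := by
    have h1 : ∑ z : Fin n → Bool, d z
        = ∑ z : Fin n → Bool, ((if z j = b then d z else 0) + (if z j = b then 0 else d z)) := by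
      refine Finset.sum_congr rfl fun z _ => ?_
      by_cases hz : z j = b <;> simp [hz]
    have h2 : ∑ z : Fin n → Bool, (if z j = b then 0 else d z)
        = ∑ z : Fin n → Bool, (if z j = b then d (fl z) else 0) := by
      rw [← Equiv.sum_comp σ (fun z => if z j = b then 0 else d z)]
      refine Finset.sum_congr rfl fun z _ => ?_
      rw [show (σ z : Fin n → Bool) = fl z from rfl]
      have hj : (fl z) j = !(z j) := Function.update_self _ _ _
      rw [hj]
      cases z j <;> cases b <;> simp
    rw [h1, Finset.sum_add_distrib, h2, ← Finset.sum_add_distrib]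
    refine Finset.sum_congr rfl fun z _ => ?_
    by_cases hz : z j = b <;> simp [hz]
  -- normalization: the P-mass of the slice {z j = b} is 1
  have slice : ∑ z : Fin n → Bool, (if z j = b then P z else 0) = 1 := by
    set q : Fin n → Bool → ℝ :=
      fun i c => if i = j then (if c = b then 1 else 0) else w c (y i) with hq
    have hzq : ∀ z : Fin n → Bool, (if z j = b then P z else 0) = ∏ i, q i (z i) := by
      intro z
      rw [show (∏ i, q i (z i)) = q j (z j) * ∏ i ∈ univ.erase j, q i (z i) from
        (Finset.mul_prod_erase univ _ (mem_univ j)).symm]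
      have h1 : q j (z j) = if z j = b then 1 else 0 := by simp [hq]
      have h2 : ∏ i ∈ univ.erase j, q i (z i) = P z := by
        refine Finset.prod_congr rfl fun i hi => ?_
        simp only [hq]
        rw [if_neg (Finset.mem_erase.1 hi).1]
      rw [h1, h2]
      by_cases hzj : z j = b <;> simp [hzj]
    rw [Finset.sum_congr rfl fun z _ => hzq z, sum_prod_bool]
    refine Finset.prod_eq_one fun i _ => ?_
    by_cases hij : i = j
    · subst hij; cases b <;> simp [hq]
    · simp only [hq, if_neg hij]
      simpa using wsum true (y i)
  -- final bound
  rw [hsm, regroup]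
  calc |∑ z : Fin n → Bool, (if z j = b then d z + d (fl z) else 0)|
      ≤ ∑ z : Fin n → Bool, |if z j = b then d z + d (fl z) else 0| :=
        Finset.abs_sum_le_sum_abs _ _
    _ ≤ ∑ z : Fin n → Bool, (if z j = b then δ * P z else 0) := by
        refine Finset.sum_le_sum fun z _ => ?_
        by_cases hz : z j = b
        · rw [if_pos hz, if_pos hz, key z hz, abs_mul, abs_mul]
          have h1 : |h z - h (fl z)| ≤ 2 := by
            have t1 := abs_le.1 (hb z)
            have t2 := abs_le.1 (hb (fl z))
            rw [abs_sub_le_iff]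
            constructor <;> linarith [t1.1, t1.2, t2.1, t2.2]
          have h2 : |δ / 2| = δ / 2 := abs_of_nonneg (by linarith)
          have h3 : |P z| = P z := abs_of_nonneg (Pnn z)
          rw [h2, h3]
          nlinarith [mul_nonneg (mul_nonneg (show (0:ℝ) ≤ δ / 2 by linarith) (Pnn z))
            (show (0:ℝ) ≤ 2 - |h z - h (fl z)| by linarith)]
        · simp [hz]
    _ = δ * ∑ z : Fin n → Bool, (if z j = b then P z else 0) := by
        rw [Finset.mul_sum]
        refine Finset.sum_congr rfl fun z _ => ?_
        by_cases hz : z j = b <;> simp [hz]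
    _ = δ := by rw [slice, mul_one]

lemma bval_abs (b : Bool) : |bval b| ≤ 1 := by cases b <;> simp [bval]

/-- **Smoothing and restricting almost commute (pointwise).** For `f : {-1,1}^n → {-1,1}`,
`δ ∈ [0,1]`, and a restriction `π`, every `x` satisfies
`|(f_π)_δ(x) − (f_δ)_π(x)| ≤ δ·|π|`. -/
theorem stmt16 {n : ℕ} (f : (Fin n → Bool) → Bool) (δ : ℝ) (hδ0 : 0 ≤ δ) (hδ1 : δ ≤ 1)
    (π : Fin n → Option Bool) (x : Fin n → Bool) :
    |smooth δ (fun z => bval (f (applyR π z))) x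
        - smooth δ (fun z => bval (f z)) (applyR π x)|
      ≤ δ * rsize π := by
  classical
  suffices H : ∀ (k : ℕ) (π : Fin n → Option Bool), rsize π = k →
      ∀ (f : (Fin n → Bool) → Bool) (x : Fin n → Bool),
      |smooth δ (fun z => bval (f (applyR π z))) x
        - smooth δ (fun z => bval (f z)) (applyR π x)| ≤ δ * k by
    simpa using H (rsize π) π rfl f x
  intro k
  induction k with
  | zero =>
    intro π hk f x
    have hnone : ∀ j, π j = none := by
      intro j
      by_contra hj
      have hs : (π j).isSome := Option.ne_none_iff_isSome.1 hj
      have : j ∈ Finset.univ.filter fun i => (π i).isSome := by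
        simp [hs]
      rw [rsize, Finset.card_eq_zero] at hk
      simp [hk] at this
    have happ : ∀ z : Fin n → Bool, applyR π z = z := by
      intro z; funext i; simp [applyR, hnone i]
    simp [happ]
  | succ k ih =>
    intro π hk f x
    -- find a fixed coordinate
    have hne : (Finset.univ.filter fun i => (π i).isSome).Nonempty := by
      rw [← Finset.card_pos, ← rsize, hk]; omega
    obtain ⟨j, hj⟩ := hne
    have hjs : (π j).isSome := (Finset.mem_filter.1 hj).2
    obtain ⟨b, hb⟩ := Option.isSome_iff_exists.1 hjs
    set π' : Fin n → Option Bool := Function.update π j none with hπ'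
    have hfilter : (Finset.univ.filter fun i => (π' i).isSome)
        = (Finset.univ.filter fun i => (π i).isSome).erase j := by
      ext i
      by_cases hij : i = j <;>
        simp [hπ', Function.update_apply, hij, Finset.mem_erase]
    have hk' : rsize π' = k := by
      rw [rsize, hfilter, Finset.card_erase_of_mem hj, ← rsize, hk]
      omega
    have happly : ∀ z : Fin n → Bool, applyR π z = Function.update (applyR π' z) j b := by
      intro z; funext i
      by_cases hij : i = j
      · subst hij
        simp [applyR, hb, Function.update_self]
      · simp [applyR, hπ', Function.update_apply, hij]
    set g : (Fin n → Bool) → Bool := fun z => f (Function.update z j b) with hg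
    have e1 : (fun z => bval (f (applyR π z))) = fun z => bval (g (applyR π' z)) := by
      funext z; rw [hg]; simp only []; rw [← happly z]
    have e2 : applyR π x = Function.update (applyR π' x) j b := happly x
    have step1 := ih π' hk' g x
    have step2 := singleStep δ hδ0 hδ1 (fun z => bval (f z)) (fun z => bval_abs (f z)) j b
      (applyR π' x)
    have e3 : smooth δ (fun z => bval (g z)) (applyR π' x)
        = smooth δ (fun z => (fun z => bval (f z)) (Function.update z j b)) (applyR π' x) := rfl
    calc |smooth δ (fun z => bval (f (applyR π z))) x
          - smooth δ (fun z => bval (f z)) (applyR π x)|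
        = |(smooth δ (fun z => bval (g (applyR π' z))) x
              - smooth δ (fun z => bval (g z)) (applyR π' x))
            + (smooth δ (fun z => bval (g z)) (applyR π' x)
              - smooth δ (fun z => bval (f z)) (Function.update (applyR π' x) j b))| := by
          rw [e1, e2]; ring_nf
      _ ≤ |smooth δ (fun z => bval (g (applyR π' z))) x
              - smooth δ (fun z => bval (g z)) (applyR π' x)|
          + |smooth δ (fun z => bval (g z)) (applyR π' x)
              - smooth δ (fun z => bval (f z)) (Function.update (applyR π' x) j b)| :=
          abs_add_le _ _
      _ ≤ δ * k + δ := by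
          refine add_le_add step1 ?_
          rw [e3]; exact step2
      _ = δ * (k + 1 : ℕ) := by push_cast; ring
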